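/- Let E : [0,∞) → ℝ^L be differentiable and M ∈ ℝ^{L×L} a Metzler matrix (all off-diagonal entries nonnegative). If E(0) ≤ 0 componentwise and Ė(t) ≤ M·E(t) componentwise for all t ≥ 0, then E(t) ≤ 0 componentwise for all t ≥ 0. -/
import Mathlib


/-- Vector comparison principle for Metzler matrices. -/
theorem metzler_comparison_nonpos
    {L : ℕ} (M : Matrix (Fin L) (Fin L) ℝ)
    (hMetzler : ∀ p r, p ≠ r → 0 ≤ M p r)
    (E : ℝ → (Fin L → ℝ))
    (hdiff : ∀ i, Differentiable ℝ (fun t => E t i))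
    (h0 : ∀ i, E 0 i ≤ 0)
    (hderiv : ∀ t, 0 ≤ t → ∀ i, deriv (fun s => E s i) t ≤ (M.mulVec (E t)) i) :
    ∀ t, 0 ≤ t → ∀ i, E t i ≤ 0 := by
  set K : ℝ := 1 + ∑ p, ∑ r, |M p r| with hKdef
  have hsum_nonneg : 0 ≤ ∑ p, ∑ r, |M p r| :=
    Finset.sum_nonneg fun p _ => Finset.sum_nonneg fun r _ => abs_nonneg _
  have hK1 : 1 ≤ K := by simp [hKdef]; linarith
  have key : ∀ ε : ℝ, 0 < ε → ∀ s, 0 ≤ s → ∀ j, E s j < ε * Real.exp (K * s) := by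
    intro ε hε
    by_contra h
    push_neg at h
    obtain ⟨s₀, hs₀, j₀, hj₀⟩ := h
    have hbar_cont : Continuous (fun s : ℝ => ε * Real.exp (K * s)) :=
      continuous_const.mul (Real.continuous_exp.comp (continuous_const.mul continuous_id))
    set S : Set ℝ := {s | 0 ≤ s ∧ ∃ j, ε * Real.exp (K * s) ≤ E s j} with hSdef
    have hSne : S.Nonempty := ⟨s₀, hs₀, j₀, hj₀⟩
    have hSbdd : BddBelow S := ⟨0, fun s hs => hs.1⟩
    have hSclosed : IsClosed S := by
      have : S = Set.Ici (0:ℝ) ∩ ⋃ j, {s | ε * Real.exp (K * s) ≤ E s j} := by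
        ext s; simp [hSdef, Set.mem_iUnion]
      rw [this]
      exact isClosed_Ici.inter (isClosed_iUnion_of_finite fun j =>
        isClosed_le hbar_cont (hdiff j).continuous)
    set t : ℝ := sInf S with htdef
    have htS : t ∈ S := hSclosed.csInf_mem hSne hSbdd
    have ht0 : 0 ≤ t := htS.1
    obtain ⟨i, hi⟩ := htS.2
    have hexp_pos : 0 < ε * Real.exp (K * t) := mul_pos hε (Real.exp_pos _)
    have htpos : 0 < t := by
      rcases ht0.lt_or_eq with h | h
      · exact h
      · exfalso
        rw [← h] at hi
        simp at hi
        have := h0 i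
        linarith
    have hlt : ∀ s, 0 ≤ s → s < t → ∀ j, E s j < ε * Real.exp (K * s) := by
      intro s hs hst j
      by_contra hcon
      push_neg at hcon
      have : t ≤ s := csInf_le hSbdd ⟨hs, j, hcon⟩
      linarith
    -- by continuity, at t all components are ≤ barrier
    have hle_all : ∀ r, E t r ≤ ε * Real.exp (K * t) := by
      intro r
      have hcont : Filter.Tendsto (fun s => E s r - ε * Real.exp (K * s)) (nhdsWithin t (Set.Iio t))
          (nhds (E t r - ε * Real.exp (K * t))) := by
        apply Filter.Tendsto.mono_left _ nhdsWithin_le_nhds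
        exact ((hdiff r).continuous.sub hbar_cont).continuousAt
      have hev : ∀ᶠ s in nhdsWithin t (Set.Iio t), E s r - ε * Real.exp (K * s) ≤ 0 := by
        have h1 : ∀ᶠ s in nhdsWithin t (Set.Iio t), s ∈ Set.Iio t := self_mem_nhdsWithin
        have h2 : ∀ᶠ s in nhdsWithin t (Set.Iio t), 0 < s :=
          Filter.Eventually.filter_mono nhdsWithin_le_nhds (eventually_gt_nhds htpos)
        filter_upwards [h1, h2] with s hs1 hs2
        have := hlt s hs2.le hs1 r
        linarith
      have := le_of_tendsto hcont hev
      linarith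
    have heq : E t i = ε * Real.exp (K * t) := le_antisymm (hle_all i) hi
    -- derivative of the gap function at t
    have hexpD : HasDerivAt (fun s => ε * Real.exp (K * s)) (ε * (Real.exp (K * t) * (K * 1))) t :=
      (((hasDerivAt_id t).const_mul K).exp).const_mul ε
    set D : ℝ := deriv (fun s => E s i) t - ε * (Real.exp (K * t) * (K * 1)) with hDdef
    have hg : HasDerivAt (fun s => E s i - ε * Real.exp (K * s)) D t :=
      ((hdiff i).differentiableAt.hasDerivAt).sub hexpD
    -- slope argument: D ≥ 0
    have hDnn : 0 ≤ D := by
      have hslope := hasDerivAt_iff_tendsto_slope.mp hg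
      have hslope' : Filter.Tendsto (slope (fun s => E s i - ε * Real.exp (K * s)) t)
          (nhdsWithin t (Set.Iio t)) (nhds D) :=
        hslope.mono_left (nhdsWithin_mono _ (fun x hx => ne_of_lt hx))
      refine ge_of_tendsto hslope' ?_
      have h1 : ∀ᶠ s in nhdsWithin t (Set.Iio t), s ∈ Set.Iio t := self_mem_nhdsWithin
      have h2 : ∀ᶠ s in nhdsWithin t (Set.Iio t), 0 < s :=
        Filter.Eventually.filter_mono nhdsWithin_le_nhds (eventually_gt_nhds htpos)
      filter_upwards [h1, h2] with s hs1 hs2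
      have hg_s : E s i - ε * Real.exp (K * s) < 0 := by
        have := hlt s hs2.le hs1 i
        linarith
      have hgt : E t i - ε * Real.exp (K * t) = 0 := by rw [heq]; ring
      rw [slope_def_field, div_nonneg_iff]
      right
      constructor
      · rw [hgt]; linarith
      · have : s < t := hs1
        linarith
    -- upper bound on the derivative
    have hub : deriv (fun s => E s i) t ≤ (∑ r, |M i r|) * (ε * Real.exp (K * t)) := by
      calc deriv (fun s => E s i) t ≤ (M.mulVec (E t)) i := hderiv t ht0 i
        _ = ∑ r, M i r * E t r := by simp [Matrix.mulVec, dotProduct]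
        _ ≤ ∑ r, |M i r| * (ε * Real.exp (K * t)) := by
            apply Finset.sum_le_sum
            intro r _
            rcases le_or_gt 0 (M i r) with hMr | hMr
            · calc M i r * E t r ≤ M i r * (ε * Real.exp (K * t)) :=
                    mul_le_mul_of_nonneg_left (hle_all r) hMr
                _ ≤ |M i r| * (ε * Real.exp (K * t)) :=
                    mul_le_mul_of_nonneg_right (le_abs_self _) hexp_pos.le
            · have hri : r = i := by
                by_contra hne
                exact absurd (hMetzler i r (fun h => hne h.symm)) (not_le.mpr hMr)
              subst hri
              rw [heq]
              exact mul_le_mul_of_nonneg_right (le_abs_self _) hexp_pos.le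
        _ = (∑ r, |M i r|) * (ε * Real.exp (K * t)) := by rw [Finset.sum_mul]
    have hrow : (∑ r, |M i r|) ≤ K - 1 := by
      have : (∑ r, |M i r|) ≤ ∑ p, ∑ r, |M p r| :=
        Finset.single_le_sum (f := fun p => ∑ r, |M p r|)
          (fun p _ => Finset.sum_nonneg fun r _ => abs_nonneg _) (Finset.mem_univ i)
      simp [hKdef]; linarith
    -- contradiction
    have hDval : deriv (fun s => E s i) t = D + ε * Real.exp (K * t) * K := by
      rw [hDdef]; ring
    have hlb : K * (ε * Real.exp (K * t)) ≤ deriv (fun s => E s i) t := by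
      rw [hDval]; nlinarith
    have : K * (ε * Real.exp (K * t)) ≤ (K - 1) * (ε * Real.exp (K * t)) := by
      calc K * (ε * Real.exp (K * t)) ≤ deriv (fun s => E s i) t := hlb
        _ ≤ (∑ r, |M i r|) * (ε * Real.exp (K * t)) := hub
        _ ≤ (K - 1) * (ε * Real.exp (K * t)) :=
            mul_le_mul_of_nonneg_right hrow hexp_pos.le
    nlinarith
  intro t ht i
  refine le_of_forall_pos_le_add ?_
  intro δ hδ
  have hC : 0 < Real.exp (K * t) := Real.exp_pos _
  have hε : 0 < δ / Real.exp (K * t) := div_pos hδ hC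
  have := (key _ hε t ht i).le
  rw [div_mul_cancel₀ _ (ne_of_gt hC)] at this
  linarith
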